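/- arXiv:1205.4382 — 3 statements merged into one kernel-verified Lean document; each statement's English description precedes it below -/
import Mathlib

section
/- (Deleting Lemma) Let G = (V,E) be a finite simple graph and p : V → ℝ². Suppose a vertex v has degree exactly 2, with the two edges at v being {v,j} and {v,k}, and suppose the three points p(v), p(j), p(k) are not collinear. Let E' = E \ {{v,j},{v,k}}. Then the stress spaces have equal dimension: s_p(E') = s_p(E). (More precisely, every stress on E vanishes on the two edges {v,j} and {v,k}, so restriction gives a linear isomorphism S_p(E) ≅ S_p(E').) -/
noncomputable section

open Classical in
/-- The edge vector of the pair `(i, j)` under the realization `p`: the function `V → ℝ × ℝ`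
whose value is `p i - p j` at `i`, `p j - p i` at `j`, and `0` elsewhere. -/
def edgeVec {V : Type*} (p : V → ℝ × ℝ) (i j : V) : V → ℝ × ℝ :=
  fun v => if v = i then p i - p j else if v = j then p j - p i else 0

/-- The set of edge vectors of a set `F` of (potential) edges under the realization `p`. -/
def edgeVecs {V : Type*} (p : V → ℝ × ℝ) (F : Set (Sym2 V)) : Set (V → ℝ × ℝ) :=
  {x | ∃ i j, s(i, j) ∈ F ∧ x = edgeVec p i j}

/-- The rank of the edge vectors of `F` under the realization `p`. -/
def rankOf {V : Type*} (p : V → ℝ × ℝ) (F : Set (Sym2 V)) : ℕ :=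
  Module.finrank ℝ (Submodule.span ℝ (edgeVecs p F))

/-- The generic rank of a set of edges: the maximum over all realizations `p` of the rank. -/
def genRankSet {V : Type*} (F : Set (Sym2 V)) : ℕ :=
  ⨆ p : V → ℝ × ℝ, rankOf p F

/-- The generic rank `r(G)` of a graph. -/
def genRank {V : Type*} (G : SimpleGraph V) : ℕ := genRankSet G.edgeSet

/-- The stress number `s_p(F)` of a set of edges under the realization `p`
(the dimension of the space of resolvable stresses). -/
def stressNum {V : Type*} (p : V → ℝ × ℝ) (F : Set (Sym2 V)) : ℕ :=
  F.ncard - rankOf p F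

/-- The generic stress number `s(F)` of a set of edges. -/
def genStressSet {V : Type*} (F : Set (Sym2 V)) : ℕ := F.ncard - genRankSet F

/-- The generic stress number `s(G)` of a graph. -/
def genStress {V : Type*} (G : SimpleGraph V) : ℕ := G.edgeSet.ncard - genRank G

/-- A planar configuration is in general position if it is injective and no three distinct
vertices have collinear images. -/
def GeneralPosition {V : Type*} (p : V → ℝ × ℝ) : Prop :=
  Function.Injective p ∧
    ∀ i j k : V, i ≠ j → j ≠ k → i ≠ k →
      ¬ Collinear ℝ ({p i, p j, p k} : Set (ℝ × ℝ))

/-- `W_U`: the subspace of functions `V → ℝ × ℝ` vanishing at every vertex outside `U`. -/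
def vanishOn {V : Type*} (U : Set V) : Submodule ℝ (V → ℝ × ℝ) where
  carrier := {f | ∀ v ∉ U, f v = 0}
  zero_mem' := fun v _ => rfl
  add_mem' := by
    intro a b ha hb v hv
    simp [Pi.add_apply, ha v hv, hb v hv]
  smul_mem' := by
    intro c f hf v hv
    simp [Pi.smul_apply, hf v hv]

end


private lemma edgeVec_comm {V : Type*} (p : V → ℝ × ℝ) (i j : V) :
    edgeVec p i j = edgeVec p j i := by
  funext w
  unfold edgeVec
  by_cases hij : i = j
  · subst hij; simp
  · by_cases h1 : w = i
    · subst h1; simp [hij, Ne.symm hij]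
    · by_cases h2 : w = j
      · subst h2; simp [h1, fun h : w = i => h1 h]
      · simp [h1, h2]

private lemma notCollinear_indep {a b c : ℝ × ℝ}
    (h : ¬ Collinear ℝ ({a, b, c} : Set (ℝ × ℝ))) :
    ∀ s t : ℝ, s • (a - b) + t • (a - c) = 0 → s = 0 ∧ t = 0 := by
  intro s t hst
  by_contra hne
  apply h
  rw [collinear_iff_of_mem (Set.mem_insert a _)]
  rcases eq_or_ne s 0 with hs | hs
  · subst hs
    simp only [zero_smul, zero_add] at hst
    have ht : t ≠ 0 := fun h0 => hne ⟨rfl, h0⟩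
    have hac : a = c := by
      rcases smul_eq_zero.mp hst with h' | h'
      · exact absurd h' ht
      · exact sub_eq_zero.mp h'
    refine ⟨b - a, ?_⟩
    intro q hq
    simp only [Set.mem_insert_iff, Set.mem_singleton_iff] at hq
    rcases hq with rfl | rfl | rfl
    · exact ⟨0, by simp⟩
    · exact ⟨1, by simp⟩
    · exact ⟨0, by simp [← hac]⟩
  · have hb : s • b = t • (a - c) + s • a := by
      linear_combination (norm := module) -hst
    refine ⟨a - c, ?_⟩
    intro q hq
    simp only [Set.mem_insert_iff, Set.mem_singleton_iff] at hq
    rcases hq with rfl | rfl | rfl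
    · exact ⟨0, by simp⟩
    · refine ⟨t / s, ?_⟩
      have h3 := congrArg (fun x => s⁻¹ • x) hb
      simp only [smul_add, smul_smul, inv_mul_cancel₀ hs, one_smul] at h3
      rw [vadd_eq_add, div_eq_inv_mul]
      exact h3
    · exact ⟨-1, by rw [vadd_eq_add]; module⟩

/-- **Deleting Lemma.** If a vertex `v` has degree exactly 2, with the two edges at `v` being
`{v, j}` and `{v, k}`, and the three points `p v, p j, p k` are not collinear, then deleting
the two edges at `v` does not change the dimension of the stress space. -/
theorem deleting_lemma {V : Type*} [Fintype V] (G : SimpleGraph V) (p : V → ℝ × ℝ)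
    (v j k : V) (hj : G.Adj v j) (hk : G.Adj v k) (hjk : j ≠ k)
    (hdeg : Nat.card (G.neighborSet v) = 2)
    (hcol : ¬ Collinear ℝ ({p v, p j, p k} : Set (ℝ × ℝ))) :
    stressNum p (G.edgeSet \ {s(v, j), s(v, k)}) = stressNum p G.edgeSet := by
  classical
  set e1 : V → ℝ × ℝ := edgeVec p v j with he1
  set e2 : V → ℝ × ℝ := edgeVec p v k with he2
  set D : Set (Sym2 V) := {s(v, j), s(v, k)} with hD
  set E' : Set (Sym2 V) := G.edgeSet \ D with hE'
  have hvj : v ≠ j := G.ne_of_adj hj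
  have hvk : v ≠ k := G.ne_of_adj hk
  have hne : s(v, j) ≠ s(v, k) := by
    simp only [Ne, Sym2.eq_iff]
    rintro (⟨-, rfl⟩ | ⟨rfl, rfl⟩)
    · exact hjk rfl
    · exact hjk rfl
  have hDsub : D ⊆ G.edgeSet := by
    rintro e he
    rcases he with rfl | rfl
    · exact hj
    · exact hk
  -- the neighbor set of v is exactly {j, k}
  have hNS : G.neighborSet v = {j, k} := by
    refine (Set.eq_of_subset_of_ncard_le ?_ ?_).symm
    · rintro x (rfl | rfl)
      · exact hj
      · exact hk
    · rw [← Nat.card_coe_set_eq, hdeg, Set.ncard_pair hjk]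
  have hnbr : ∀ w, G.Adj v w → w = j ∨ w = k := by
    intro w hw
    have : w ∈ G.neighborSet v := hw
    rw [hNS] at this
    simpa using this
  have hiv : ∀ a b : ℝ, a • (p v - p j) + b • (p v - p k) = 0 → a = 0 ∧ b = 0 :=
    fun a b => notCollinear_indep hcol a b
  have he1v : e1 v = p v - p j := by simp [he1, edgeVec]
  have he2v : e2 v = p v - p k := by simp [he2, edgeVec]
  set T : Submodule ℝ (V → ℝ × ℝ) := Submodule.span ℝ {e1, e2} with hT
  set S' : Submodule ℝ (V → ℝ × ℝ) := Submodule.span ℝ (edgeVecs p E') with hS'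
  -- every element of S' vanishes at v
  have hvanish : ∀ x ∈ S', x v = 0 := by
    have hle : S' ≤ LinearMap.ker (LinearMap.proj v : (V → ℝ × ℝ) →ₗ[ℝ] ℝ × ℝ) := by
      rw [hS', Submodule.span_le]
      rintro _ ⟨i, l, hil, rfl⟩
      simp only [SetLike.mem_coe, LinearMap.mem_ker, LinearMap.proj_apply]
      have hvi : v ≠ i := by
        rintro rfl
        rcases hnbr l ((G.mem_edgeSet).mp hil.1) with rfl | rfl
        · exact hil.2 (Or.inl rfl)
        · exact hil.2 (Or.inr rfl)
      have hvl : v ≠ l := by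
        rintro rfl
        have hadj : G.Adj v i := ((G.mem_edgeSet).mp hil.1).symm
        rcases hnbr i hadj with rfl | rfl
        · exact hil.2 (by simp [hD, Sym2.eq_swap])
        · exact hil.2 (by simp [hD, Sym2.eq_swap])
      simp [edgeVec, hvi, hvl]
    exact fun x hx => hle hx
  -- S' and T intersect trivially
  have hdisj : S' ⊓ T = ⊥ := by
    rw [eq_bot_iff]
    rintro x ⟨hx1, hx2⟩
    rcases Submodule.mem_span_pair.mp hx2 with ⟨a, b, rfl⟩
    have hv0 := hvanish _ hx1
    rw [Pi.add_apply, Pi.smul_apply, Pi.smul_apply, he1v, he2v] at hv0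
    obtain ⟨ha, hb⟩ := hiv a b hv0
    simp [Submodule.mem_bot, ha, hb]
  -- e1, e2 are linearly independent
  have hli : LinearIndependent ℝ ![e1, e2] := by
    rw [LinearIndependent.pair_iff]
    intro a b hab
    have hv0 := congrFun hab v
    rw [Pi.add_apply, Pi.smul_apply, Pi.smul_apply, he1v, he2v] at hv0
    exact hiv a b hv0
  have hTrk : Module.finrank ℝ T = 2 := by
    have hr : Set.range ![e1, e2] = {e1, e2} := by
      ext x; simp [Fin.exists_fin_two]; tauto
    rw [hT, ← hr, finrank_span_eq_card hli]
    simp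
  -- span decomposition
  have hspan : Submodule.span ℝ (edgeVecs p G.edgeSet) = S' ⊔ T := by
    apply le_antisymm
    · rw [Submodule.span_le]
      rintro _ ⟨i, l, hil, rfl⟩
      by_cases hmem : s(i, l) ∈ D
      · rcases hmem with h | h
        · rcases Sym2.eq_iff.mp h with ⟨rfl, rfl⟩ | ⟨rfl, rfl⟩
          · exact Submodule.mem_sup_right (Submodule.subset_span (Or.inl rfl))
          · rw [edgeVec_comm]
            exact Submodule.mem_sup_right (Submodule.subset_span (Or.inl rfl))
        · rcases Sym2.eq_iff.mp h with ⟨rfl, rfl⟩ | ⟨rfl, rfl⟩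
          · exact Submodule.mem_sup_right (Submodule.subset_span (Or.inr rfl))
          · rw [edgeVec_comm]
            exact Submodule.mem_sup_right (Submodule.subset_span (Or.inr rfl))
      · exact Submodule.mem_sup_left (Submodule.subset_span ⟨i, l, ⟨hil, hmem⟩, rfl⟩)
    · refine sup_le ?_ ?_
      · refine Submodule.span_mono ?_
        rintro x ⟨i, l, hil, rfl⟩
        exact ⟨i, l, hil.1, rfl⟩
      · rw [hT, Submodule.span_le]
        rintro x (rfl | rfl)
        · exact Submodule.subset_span ⟨v, j, hj, rfl⟩
        · exact Submodule.subset_span ⟨v, k, hk, rfl⟩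
  -- rank equality
  have hrank : rankOf p G.edgeSet = rankOf p E' + 2 := by
    have hfin := Submodule.finrank_sup_add_finrank_inf_eq S' T
    rw [hdisj] at hfin
    simp only [finrank_bot] at hfin
    unfold rankOf
    rw [hspan, ← hS']
    omega
  -- cardinalities
  have hD2 : D.ncard = 2 := Set.ncard_pair hne
  have h2le : 2 ≤ G.edgeSet.ncard := hD2 ▸ Set.ncard_le_ncard hDsub (Set.toFinite _)
  have hc : G.edgeSet.ncard = E'.ncard + 2 := by
    have h1 : E'.ncard = G.edgeSet.ncard - 2 := by
      rw [hE', Set.ncard_diff hDsub, hD2]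
    omega
  simp only [stressNum]
  rw [hrank, hc]
  omega
end

section
/- Let G = (V,E) be a finite simple graph and let p : V → ℝ² be in general position. Let U ⊆ V be a nonempty subset. Then (span{v_{ij}(p) : {i,j} ∈ E}) ∩ W_U ⊆ span{v_{ij}(p) : i,j ∈ U, i ≠ j}, where W_U is the subspace of functions V → ℝ² vanishing at every vertex outside U, and the right-hand span is over all edges of the complete graph on U. -/
/-!
Edge vectors are equilibrium loads: they have zero resultant and zero torque, so the same holds
for everything in the span of the edges of `G`. Conversely, for `p` in general position every
equilibrium load `f` supported on `U` lies in the span of the edge vectors of the complete graph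
on `U`. Fix two vertices `a ≠ b` of `U`. At any other vertex `c` the vectors `p c - p a` and
`p c - p b` span the plane, so the value `f c` is cancelled by a combination of `v_ca` and `v_cb`.
What is left is supported on `{a, b}`, and zero resultant and torque force it to be a multiple
of `v_ab`.
-/

def cross (u w : ℝ × ℝ) : ℝ := u.1 * w.2 - u.2 * w.1

theorem exists_eq_smul_of_cross_eq_zero {u z : ℝ × ℝ} (hu : u ≠ 0) (h : cross u z = 0) :
    ∃ t : ℝ, z = t • u := by
  have hn : u.1 ^ 2 + u.2 ^ 2 ≠ 0 := by
    contrapose! hu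
    have h1 : u.1 = 0 := by nlinarith [sq_nonneg u.1, sq_nonneg u.2]
    have h2 : u.2 = 0 := by nlinarith [sq_nonneg u.1, sq_nonneg u.2]
    exact Prod.ext h1 h2
  unfold cross at h
  refine ⟨(u.1 * z.1 + u.2 * z.2) / (u.1 ^ 2 + u.2 ^ 2), Prod.ext ?_ ?_⟩ <;>
    simp only [Prod.smul_fst, Prod.smul_snd, smul_eq_mul] <;> field_simp
  · linear_combination (-u.2) * h
  · linear_combination u.1 * h

section

variable {V : Type*}

theorem edgeVec_apply_left (p : V → ℝ × ℝ) (i j : V) : edgeVec p i j i = p i - p j := by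
  simp [edgeVec]

theorem edgeVec_apply_right (p : V → ℝ × ℝ) {i j : V} (h : i ≠ j) :
    edgeVec p i j j = p j - p i := by
  simp [edgeVec, h.symm]

theorem edgeVec_apply_of_ne (p : V → ℝ × ℝ) {i j v : V} (hi : v ≠ i) (hj : v ≠ j) :
    edgeVec p i j v = 0 := by
  simp [edgeVec, hi, hj]

theorem edgeVec_self (p : V → ℝ × ℝ) (i : V) : edgeVec p i i = 0 := by
  funext v
  by_cases hv : v = i
  · simp [hv, edgeVec_apply_left]
  · exact edgeVec_apply_of_ne p hv hv

theorem edgeVec_mem_vanishOn (p : V → ℝ × ℝ) (i j : V) : edgeVec p i j ∈ vanishOn {i, j} :=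
  fun _ hv => edgeVec_apply_of_ne p (fun h => hv (.inl h)) (fun h => hv (.inr h))

def pairEdgeVecs (p : V → ℝ × ℝ) (S : Set V) : Set (V → ℝ × ℝ) :=
  {x | ∃ i ∈ S, ∃ j ∈ S, i ≠ j ∧ x = edgeVec p i j}

theorem span_pairEdgeVecs_mono (p : V → ℝ × ℝ) {S T : Set V} (h : S ⊆ T) :
    Submodule.span ℝ (pairEdgeVecs p S) ≤ Submodule.span ℝ (pairEdgeVecs p T) :=
  Submodule.span_mono fun _ ⟨i, hi, j, hj, hij, hx⟩ => ⟨i, h hi, j, h hj, hij, hx⟩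

theorem span_pairEdgeVecs_le_vanishOn (p : V → ℝ × ℝ) (S : Set V) :
    Submodule.span ℝ (pairEdgeVecs p S) ≤ vanishOn S := by
  rw [Submodule.span_le]
  rintro _ ⟨i, hi, j, hj, -, rfl⟩ v hv
  exact edgeVec_apply_of_ne p (ne_of_mem_of_not_mem hi hv).symm (ne_of_mem_of_not_mem hj hv).symm

theorem exists_mem_span_pairEdgeVecs_apply_eq {p : V → ℝ × ℝ} (hp : GeneralPosition p)
    {a b c : V} (hab : a ≠ b) (hbc : b ≠ c) (hac : a ≠ c) (z : ℝ × ℝ) :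
    ∃ h ∈ Submodule.span ℝ (pairEdgeVecs p {a, b, c}), h c = z := by
  have hspan : vectorSpan ℝ {p c, p a, p b} = ⊤ := by
    have hnc := hp.2 c a b hac.symm hab hbc.symm
    rw [collinear_iff_finrank_le_one, not_le] at hnc
    refine Submodule.eq_top_of_finrank_eq (le_antisymm (Submodule.finrank_le _) ?_)
    simp only [Module.finrank_prod, Module.finrank_self]
    omega
  have hz : z ∈ Submodule.span ℝ {p c - p a, p c - p b} := by
    rw [← Submodule.span_insert_zero, ← sub_self (p c)]
    rw [vectorSpan_eq_span_vsub_set_left ℝ (Set.mem_insert (p c) _)] at hspan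
    simp only [Set.image_insert_eq, Set.image_singleton, vsub_eq_sub] at hspan
    exact hspan ▸ Submodule.mem_top
  obtain ⟨α, β, hαβ⟩ := Submodule.mem_span_pair.mp hz
  refine ⟨α • edgeVec p c a + β • edgeVec p c b, ?_, ?_⟩
  · exact add_mem
      (Submodule.smul_mem _ _ (Submodule.subset_span ⟨c, by simp, a, by simp, hac.symm, rfl⟩))
      (Submodule.smul_mem _ _ (Submodule.subset_span ⟨c, by simp, b, by simp, hbc.symm, rfl⟩))
  · simpa [edgeVec_apply_left] using hαβ

variable [Fintype V]

@[simps]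
def resultant : (V → ℝ × ℝ) →ₗ[ℝ] ℝ × ℝ where
  toFun f := ∑ v, f v
  map_add' f g := Finset.sum_add_distrib
  map_smul' c f := by simp [Finset.smul_sum]

@[simps]
def torque (p : V → ℝ × ℝ) : (V → ℝ × ℝ) →ₗ[ℝ] ℝ where
  toFun f := ∑ v, cross (p v) (f v)
  map_add' f g := by
    simp only [← Finset.sum_add_distrib, cross, Pi.add_apply, Prod.fst_add, Prod.snd_add]
    exact Finset.sum_congr rfl fun _ _ => by ring
  map_smul' c f := by
    simp only [Finset.mul_sum, cross, Pi.smul_apply, Prod.smul_fst, Prod.smul_snd, smul_eq_mul,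
      RingHom.id_apply]
    exact Finset.sum_congr rfl fun _ _ => by ring

/-- The loads annihilating the trivial infinitesimal motions (translations and rotations). -/
def equilibriumLoads (p : V → ℝ × ℝ) : Submodule ℝ (V → ℝ × ℝ) :=
  LinearMap.ker resultant ⊓ LinearMap.ker (torque p)

theorem resultant_eq_add_of_mem_vanishOn_pair {a b : V} (hab : a ≠ b) {f : V → ℝ × ℝ}
    (hf : f ∈ vanishOn {a, b}) : resultant f = f a + f b :=
  (resultant_apply f).trans <| Fintype.sum_eq_add a b hab fun _ hv => hf _ (by simpa using hv)

theorem torque_eq_add_of_mem_vanishOn_pair (p : V → ℝ × ℝ) {a b : V} (hab : a ≠ b)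
    {f : V → ℝ × ℝ} (hf : f ∈ vanishOn {a, b}) :
    torque p f = cross (p a) (f a) + cross (p b) (f b) :=
  (torque_apply p f).trans <| Fintype.sum_eq_add a b hab fun _ hv => by
    simp [hf _ (by simpa using hv), cross]

theorem edgeVec_mem_equilibriumLoads (p : V → ℝ × ℝ) (i j : V) :
    edgeVec p i j ∈ equilibriumLoads p := by
  rcases eq_or_ne i j with rfl | hij
  · rw [edgeVec_self]
    exact zero_mem _
  have hv := edgeVec_mem_vanishOn p i j
  refine ⟨?_, ?_⟩
  · simp [LinearMap.mem_ker, resultant_eq_add_of_mem_vanishOn_pair hij hv, edgeVec_apply_left,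
      edgeVec_apply_right p hij]
  · simp only [SetLike.mem_coe, LinearMap.mem_ker, torque_eq_add_of_mem_vanishOn_pair p hij hv,
      edgeVec_apply_left, edgeVec_apply_right p hij, cross, Prod.fst_sub, Prod.snd_sub]
    ring

theorem span_le_equilibriumLoads (p : V → ℝ × ℝ) {s : Set (V → ℝ × ℝ)}
    (hs : ∀ x ∈ s, ∃ i j, x = edgeVec p i j) : Submodule.span ℝ s ≤ equilibriumLoads p :=
  Submodule.span_le.mpr fun x hx => by
    obtain ⟨i, j, rfl⟩ := hs x hx
    exact edgeVec_mem_equilibriumLoads p i j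

theorem eq_zero_of_mem_vanishOn_of_subsingleton {S : Set V} (hS : S.Subsingleton)
    {f : V → ℝ × ℝ} (hf : f ∈ vanishOn S) (hres : resultant f = 0) : f = 0 := by
  funext v
  by_cases hv : v ∈ S
  · rw [Pi.zero_apply, ← hres, resultant_apply,
      Fintype.sum_eq_single v fun w hw => hf w fun hwS => hw (hS hwS hv)]
  · exact hf v hv

theorem mem_span_edgeVec_of_mem_vanishOn_pair {p : V → ℝ × ℝ} (hp : Function.Injective p)
    {a b : V} (hab : a ≠ b) {f : V → ℝ × ℝ} (hf : f ∈ vanishOn {a, b})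
    (hfe : f ∈ equilibriumLoads p) : f ∈ ℝ ∙ edgeVec p a b := by
  obtain ⟨hres, htor⟩ := hfe
  rw [SetLike.mem_coe, LinearMap.mem_ker, resultant_eq_add_of_mem_vanishOn_pair hab hf] at hres
  rw [SetLike.mem_coe, LinearMap.mem_ker, torque_eq_add_of_mem_vanishOn_pair p hab hf] at htor
  have hfb : f b = -f a := eq_neg_of_add_eq_zero_right hres
  have hcross : cross (p a - p b) (f a) = 0 := by
    rw [hfb] at htor
    simp only [cross, Prod.fst_sub, Prod.snd_sub, Prod.fst_neg, Prod.snd_neg] at htor ⊢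
    linear_combination htor
  obtain ⟨t, ht⟩ := exists_eq_smul_of_cross_eq_zero (sub_ne_zero.mpr (hp.ne hab)) hcross
  refine Submodule.mem_span_singleton.mpr ⟨t, funext fun v => ?_⟩
  rw [Pi.smul_apply]
  by_cases hva : v = a
  · rw [hva, edgeVec_apply_left, ht]
  by_cases hvb : v = b
  · rw [hvb, edgeVec_apply_right p hab, hfb, ht, ← smul_neg, neg_sub]
  rw [edgeVec_apply_of_ne p hva hvb, smul_zero, hf v (by simp [hva, hvb])]

theorem exists_mem_span_pairEdgeVecs_sub_mem_vanishOn_pair {p : V → ℝ × ℝ}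
    (hp : GeneralPosition p) {S : Set V} {a b : V} (ha : a ∈ S) (hb : b ∈ S) (hab : a ≠ b)
    {f : V → ℝ × ℝ} (hf : f ∈ vanishOn S) :
    ∃ H ∈ Submodule.span ℝ (pairEdgeVecs p S), f - H ∈ vanishOn {a, b} := by
  have hcorr : ∀ c, ∃ h ∈ Submodule.span ℝ (pairEdgeVecs p S),
      h ∈ vanishOn {a, b, c} ∧ (c ≠ a → c ≠ b → h c = f c) := by
    intro c
    by_cases hc : c ∈ S ∧ c ≠ a ∧ c ≠ b
    · obtain ⟨h, hmem, hhc⟩ :=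
        exists_mem_span_pairEdgeVecs_apply_eq hp hab hc.2.2.symm hc.2.1.symm (f c)
      exact ⟨h, span_pairEdgeVecs_mono p (by simp [Set.insert_subset_iff, ha, hb, hc.1]) hmem,
        span_pairEdgeVecs_le_vanishOn p _ hmem, fun _ _ => hhc⟩
    · exact ⟨0, zero_mem _, zero_mem _,
        fun hca hcb => (hf c fun hcS => hc ⟨hcS, hca, hcb⟩).symm⟩
  choose h hmem hvan hval using hcorr
  refine ⟨∑ c, h c, Submodule.sum_mem _ fun c _ => hmem c, fun v hv => ?_⟩
  simp only [Set.mem_insert_iff, Set.mem_singleton_iff, not_or] at hv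
  rw [Pi.sub_apply, Finset.sum_apply,
    Fintype.sum_eq_single v fun c hc => hvan c v (by simp [hv, Ne.symm hc]),
    hval v hv.1 hv.2, sub_self]

theorem equilibriumLoads_inf_vanishOn_le {p : V → ℝ × ℝ} (hp : GeneralPosition p)
    (S : Set V) :
    equilibriumLoads p ⊓ vanishOn S ≤ Submodule.span ℝ (pairEdgeVecs p S) := by
  rintro f ⟨hfe, hfS⟩
  rcases S.subsingleton_or_nontrivial with hS | ⟨a, ha, b, hb, hab⟩
  · rw [eq_zero_of_mem_vanishOn_of_subsingleton hS hfS hfe.1]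
    exact zero_mem _
  obtain ⟨H, hH, hfH⟩ := exists_mem_span_pairEdgeVecs_sub_mem_vanishOn_pair hp ha hb hab hfS
  have hHe : H ∈ equilibriumLoads p :=
    span_le_equilibriumLoads p (s := pairEdgeVecs p S)
      (fun _ ⟨i, _, j, _, _, hx⟩ => ⟨i, j, hx⟩) hH
  have hedge : f - H ∈ ℝ ∙ edgeVec p a b :=
    mem_span_edgeVec_of_mem_vanishOn_pair hp.1 hab hfH (sub_mem hfe hHe)
  have hedge_le : ℝ ∙ edgeVec p a b ≤ Submodule.span ℝ (pairEdgeVecs p S) :=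
    (Submodule.span_singleton_le_iff_mem _ _).mpr
      (Submodule.subset_span ⟨a, ha, b, hb, hab, rfl⟩)
  simpa using add_mem (hedge_le hedge) hH

end

theorem span_inter_vanishOn_le_general {V : Type*} [Fintype V] (G : SimpleGraph V)
    (p : V → ℝ × ℝ) (hp : GeneralPosition p) (U : Set V) :
    Submodule.span ℝ (edgeVecs p G.edgeSet) ⊓ vanishOn U ≤
      Submodule.span ℝ {x | ∃ i ∈ U, ∃ j ∈ U, i ≠ j ∧ x = edgeVec p i j} :=
  have hG : Submodule.span ℝ (edgeVecs p G.edgeSet) ≤ equilibriumLoads p :=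
    span_le_equilibriumLoads p fun _ ⟨i, j, _, hx⟩ => ⟨i, j, hx⟩
  (inf_le_inf_right _ hG).trans (equilibriumLoads_inf_vanishOn_le hp U)

/-- If `p` is in general position and `U ⊆ V` is nonempty, then
`span{v_ij(p) : {i,j} ∈ E} ∩ W_U ⊆ span{v_ij(p) : i, j ∈ U, i ≠ j}`. -/
theorem span_inter_vanishOn_le {V : Type*} [Fintype V] (G : SimpleGraph V)
    (p : V → ℝ × ℝ) (hp : GeneralPosition p) (U : Set V) (hU : U.Nonempty) :
    Submodule.span ℝ (edgeVecs p G.edgeSet) ⊓ vanishOn U ≤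
      Submodule.span ℝ {x | ∃ i ∈ U, ∃ j ∈ U, i ≠ j ∧ x = edgeVec p i j} :=
  span_inter_vanishOn_le_general G p hp U
end

section
/- Let G = (V,E) be a finite simple graph and p : V → ℝ² a map in general position. Suppose deleting one edge e ∈ E increases the number of connected components of the graph by 1 (i.e. e is a bridge). Then deleting e does not affect the number of stress: s_p(E \ {e}) = s_p(E). -/
section Aux

open Classical

private lemma edgeVec_eq_single {V : Type*} (p : V → ℝ × ℝ) (i j : V) :
    edgeVec p i j = Pi.single i (p i - p j) + Pi.single j (p j - p i) := by
  funext v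
  simp only [edgeVec, Pi.add_apply, Pi.single_apply]
  split_ifs with h1 h2 <;> simp_all

private lemma edgeVec_symm {V : Type*} (p : V → ℝ × ℝ) (a b : V) :
    edgeVec p b a = edgeVec p a b := by
  funext v
  simp only [edgeVec]
  split_ifs with h1 h2 <;> simp_all

end Aux

/-- If deleting the edge `e` of `G` increases the number of connected components by 1
(i.e. `e` is a bridge), then deleting `e` does not affect the number of stress. -/
theorem stressNum_delete_bridge {V : Type*} [Fintype V] (G : SimpleGraph V)
    (p : V → ℝ × ℝ) (hp : GeneralPosition p) (e : Sym2 V) (he : e ∈ G.edgeSet)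
    (hbridge : Nat.card (G.deleteEdges {e}).ConnectedComponent
      = Nat.card G.ConnectedComponent + 1) :
    stressNum p (G.edgeSet \ {e}) = stressNum p G.edgeSet := by
  classical
  induction e using Sym2.ind with
  | _ a b =>
  set e : Sym2 V := s(a, b) with hedef
  have hGab : G.Adj a b := G.mem_edgeSet.mp he
  have hab : a ≠ b := G.ne_of_adj hGab
  set H := G.deleteEdges {e} with hH
  -- e is a bridge : a and b are not reachable in H
  have hnr : ¬ H.Reachable a b := by
    intro hr
    have hadj : ∀ u v, G.Adj u v → H.Reachable u v := by
      intro u v huv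
      by_cases hc : s(u, v) = e
      · rcases Sym2.eq_iff.mp hc with ⟨rfl, rfl⟩ | ⟨rfl, rfl⟩
        · exact hr
        · exact hr.symm
      · exact SimpleGraph.Adj.reachable (by simp [hH, hc, huv])
    have key : ∀ {u v : V}, G.Walk u v → H.Reachable u v := by
      intro u v w
      induction w with
      | nil => exact SimpleGraph.Reachable.refl _
      | cons h _ ih => exact (hadj _ _ h).trans ih
    have : Nat.card H.ConnectedComponent = Nat.card G.ConnectedComponent :=
      Nat.card_congr
        ⟨SimpleGraph.ConnectedComponent.lift (fun v => G.connectedComponentMk v)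
            (fun v w pth _ => SimpleGraph.ConnectedComponent.sound
              ((SimpleGraph.Reachable.mono (SimpleGraph.deleteEdges_le _) ⟨pth⟩))),
          SimpleGraph.ConnectedComponent.lift (fun v => H.connectedComponentMk v)
            (fun v w pth _ => SimpleGraph.ConnectedComponent.sound (key pth)),
          SimpleGraph.ConnectedComponent.ind fun v => rfl,
          SimpleGraph.ConnectedComponent.ind fun v => rfl⟩
    omega
  -- the linear functional summing over the component of a in H
  set s : Finset V := Finset.univ.filter (fun v => H.Reachable a v) with hs
  set φ : (V → ℝ × ℝ) →ₗ[ℝ] ℝ × ℝ := ∑ v ∈ s, LinearMap.proj v with hφ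
  have hφ_apply : ∀ f : V → ℝ × ℝ, φ f = ∑ v ∈ s, f v := by
    intro f; simp [hφ, LinearMap.sum_apply]
  have hφ_single : ∀ (i : V) (c : ℝ × ℝ),
      φ (Pi.single i c) = if i ∈ s then c else 0 := by
    intro i c; rw [hφ_apply]; exact Finset.sum_pi_single' i c s
  have hφ_edge : ∀ i j : V, φ (edgeVec p i j)
      = (if i ∈ s then p i - p j else 0) + (if j ∈ s then p j - p i else 0) := by
    intro i j
    rw [edgeVec_eq_single, map_add, hφ_single, hφ_single]
  -- small span is in ker φ
  set w : V → ℝ × ℝ := edgeVec p a b with hw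
  set Esmall : Set (Sym2 V) := G.edgeSet \ {e} with hEsmall
  have ha_mem : a ∈ s := by simp only [hs, Finset.mem_filter, Finset.mem_univ, true_and]; exact SimpleGraph.Reachable.refl a
  have hb_mem : b ∉ s := by simp [hs]; exact hnr
  have hφw : φ w = p a - p b := by
    rw [hw, hφ_edge]; simp [ha_mem, hb_mem]
  have hpab : p a - p b ≠ 0 := sub_ne_zero_of_ne (fun h => hab (hp.1 h))
  have hwne : w ≠ 0 := fun h => hpab (by rw [← hφw, h, map_zero])
  have hker : Submodule.span ℝ (edgeVecs p Esmall) ≤ LinearMap.ker φ := by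
    rw [Submodule.span_le]
    rintro x ⟨i, j, hij, rfl⟩
    have hijadj : H.Adj i j := by
      rw [hEsmall, Set.mem_diff, Set.mem_singleton_iff] at hij
      rw [hH]
      exact SimpleGraph.deleteEdges_adj.mpr ⟨G.mem_edgeSet.mp hij.1, by simpa using hij.2⟩
    have hsiff : i ∈ s ↔ j ∈ s := by
      simp only [hs, Finset.mem_filter, Finset.mem_univ, true_and]
      exact ⟨fun h => h.trans hijadj.reachable, fun h => h.trans hijadj.symm.reachable⟩
    simp only [SetLike.mem_coe, LinearMap.mem_ker]
    rw [hφ_edge]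
    by_cases hi : i ∈ s
    · simp [hi, hsiff.mp hi]
    · have hj : j ∉ s := fun h => hi (hsiff.mpr h)
      simp [hi, hj]
  have hwnotin : w ∉ Submodule.span ℝ (edgeVecs p Esmall) := by
    intro hmem
    exact hpab (by rw [← hφw]; exact hker hmem)
  -- edge vectors of E are insert w of the small ones
  have hsetE : edgeVecs p G.edgeSet = insert w (edgeVecs p Esmall) := by
    ext x
    constructor
    · rintro ⟨i, j, hij, rfl⟩
      by_cases hc : s(i, j) = e
      · left
        rcases Sym2.eq_iff.mp hc with ⟨rfl, rfl⟩ | ⟨rfl, rfl⟩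
        · rfl
        · exact edgeVec_symm p _ _
      · exact Or.inr ⟨i, j, ⟨hij, hc⟩, rfl⟩
    · rintro (rfl | ⟨i, j, hij, rfl⟩)
      · exact ⟨a, b, he, rfl⟩
      · exact ⟨i, j, hij.1, rfl⟩
        
  -- rank computation
  have hrank : rankOf p G.edgeSet = rankOf p Esmall + 1 := by
    have hspan : Submodule.span ℝ (edgeVecs p G.edgeSet)
        = (ℝ ∙ w) ⊔ Submodule.span ℝ (edgeVecs p Esmall) := by
      rw [hsetE, Submodule.span_insert]
    have hinf : (ℝ ∙ w) ⊓ Submodule.span ℝ (edgeVecs p Esmall) = ⊥ := by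
      rw [eq_bot_iff]
      rintro x ⟨hx1, hx2⟩
      obtain ⟨c, rfl⟩ := Submodule.mem_span_singleton.mp hx1
      rcases eq_or_ne c 0 with rfl | hc
      · simp
      · exact absurd (by simpa [smul_smul, inv_mul_cancel₀ hc] using
          (Submodule.span ℝ (edgeVecs p Esmall)).smul_mem c⁻¹ hx2) hwnotin
    have := Submodule.finrank_sup_add_finrank_inf_eq (ℝ ∙ w)
      (Submodule.span ℝ (edgeVecs p Esmall))
    rw [hinf, finrank_bot, finrank_span_singleton hwne] at this
    show Module.finrank ℝ (Submodule.span ℝ (edgeVecs p G.edgeSet))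
      = Module.finrank ℝ (Submodule.span ℝ (edgeVecs p Esmall)) + 1
    rw [hspan]
    omega
  -- cardinality computation
  have hfin : G.edgeSet.Finite := Set.toFinite _
  have hcard : (G.edgeSet \ {e}).ncard + 1 = G.edgeSet.ncard :=
    Set.ncard_diff_singleton_add_one he hfin
  rw [← hEsmall] at hcard
  simp only [stressNum]
  rw [hrank, ← hcard]
  exact (Nat.succ_sub_succ _ _).symm
end
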